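/- arXiv:1505.06467 — 2 statements merged into one kernel-verified Lean document; each statement's English description precedes it below -/
import Mathlib

section
/- Let x be a formal variable and define β'_n(x) = (xq;q)_n (x^{-1};q)_n / (q;q)_{2n}. Then the second derivative in x evaluated at x = 1 satisfies d²/dx² β'_n(x)|_{x=1} = -2 (q;q)_{n-1}² / (q;q)_{2n} for all n ≥ 1. -/
/-!
Write `n = m + 1`. Splitting off the factor `j = m` of `(xq;q)_n` and the factor `j = 0` of
`(x⁻¹;q)_n`, the numerator of `β'_n` becomes `v(x) h(x)` with `v(x) = (1 - x q^n)(1 - x⁻¹)` and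
`h(x) = (xq;q)_m (x⁻¹q;q)_m`. Since `h(x⁻¹) = h(x)`, `h'(1) = 0`, and `v(1) = 0`; so Leibniz' rule
leaves only `v''(1) h(1) = -2 (q;q)_m²`.
-/

open Finset

section

variable {𝕜 : Type*} [NontriviallyNormedField 𝕜]

theorem iteratedDeriv_two_eq_deriv_deriv (f : 𝕜 → 𝕜) :
    iteratedDeriv 2 f = deriv (deriv f) := by
  rw [iteratedDeriv_eq_iterate]; rfl

theorem iteratedDeriv_two_mul {f g : 𝕜 → 𝕜} {x : 𝕜} (hf : ContDiffAt 𝕜 2 f x)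
    (hg : ContDiffAt 𝕜 2 g x) :
    iteratedDeriv 2 (fun y => f y * g y) x =
      iteratedDeriv 2 f x * g x + 2 * deriv f x * deriv g x + f x * iteratedDeriv 2 g x := by
  rw [iteratedDeriv_fun_mul hf hg]
  simp only [sum_range_succ, sum_range_zero, iteratedDeriv_zero, iteratedDeriv_one]
  norm_num [Nat.choose]
  ring

theorem deriv_eq_zero_of_comp_inv_eq [CharZero 𝕜] {h : 𝕜 → 𝕜}
    (hd : DifferentiableAt 𝕜 h 1) (hinv : ∀ x, h x⁻¹ = h x) : deriv h 1 = 0 := by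
  have hd' : HasDerivAt h (deriv h 1) (1 : 𝕜)⁻¹ := by simpa using hd.hasDerivAt
  have hcomp := (hd'.comp (1 : 𝕜) (hasDerivAt_inv one_ne_zero)).deriv
  simp only [Function.comp_def, hinv, inv_one, one_pow, mul_neg, mul_one] at hcomp
  linear_combination (1 / 2 : 𝕜) * hcomp

theorem iteratedDeriv_two_one_sub_mul_one_sub_inv (c : 𝕜) :
    iteratedDeriv 2 (fun x => (1 - x * c) * (1 - x⁻¹)) 1 = -2 := by
  have hb' : deriv (fun x : 𝕜 => 1 - x⁻¹) = fun x => (x ^ 2)⁻¹ := by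
    simp [deriv_const_sub', deriv_inv']
  have hb'' : deriv (fun x : 𝕜 => (x ^ 2)⁻¹) 1 = -2 := by
    rw [deriv_fun_inv'' (by fun_prop) (by norm_num)]
    norm_num
  have ha' : deriv (fun x : 𝕜 => 1 - x * c) 1 = -c := by simp
  rw [iteratedDeriv_two_mul (by fun_prop) (by fun_prop (disch := norm_num)),
    iteratedDeriv_two_eq_deriv_deriv (fun x => 1 - x⁻¹), hb', hb'', ha']
  simp only [inv_one, one_pow, sub_self, mul_zero, one_mul]
  ring

def symmetricQProd (q : 𝕜) (m : ℕ) (x : 𝕜) : 𝕜 :=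
  ∏ j ∈ range m, (1 - x * q ^ (j + 1)) * (1 - x⁻¹ * q ^ (j + 1))

theorem symmetricQProd_inv (q : 𝕜) (m : ℕ) (x : 𝕜) :
    symmetricQProd q m x⁻¹ = symmetricQProd q m x := by
  simp only [symmetricQProd, inv_inv, mul_comm]

theorem symmetricQProd_one (q : 𝕜) (m : ℕ) :
    symmetricQProd q m 1 = (∏ j ∈ range m, (1 - q ^ (j + 1))) ^ 2 := by
  simp [symmetricQProd, sq, prod_mul_distrib]

theorem contDiffAt_symmetricQProd (q : 𝕜) (m : ℕ) {x : 𝕜} (hx : x ≠ 0) {n : WithTop ℕ∞} :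
    ContDiffAt 𝕜 n (symmetricQProd q m) x := by
  unfold symmetricQProd
  fun_prop (disch := exact hx)

theorem deriv_symmetricQProd_one [CharZero 𝕜] (q : 𝕜) (m : ℕ) :
    deriv (symmetricQProd q m) 1 = 0 :=
  deriv_eq_zero_of_comp_inv_eq
    ((contDiffAt_symmetricQProd q m one_ne_zero).differentiableAt one_ne_zero)
    (symmetricQProd_inv q m)

theorem prod_mul_prod_eq_mul_symmetricQProd (q : 𝕜) (m : ℕ) (x : 𝕜) :
    (∏ j ∈ range (m + 1), (1 - x * q ^ (j + 1))) * (∏ j ∈ range (m + 1), (1 - x⁻¹ * q ^ j)) =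
      (1 - x * q ^ (m + 1)) * (1 - x⁻¹) * symmetricQProd q m x := by
  rw [prod_range_succ, prod_range_succ', symmetricQProd, prod_mul_distrib]
  simp only [pow_zero, mul_one]
  ring

end

theorem second_deriv_beta_at_one_general (q : ℝ) (n : ℕ) (hn : 1 ≤ n) :
    deriv (deriv fun x : ℝ =>
        (∏ j ∈ Finset.range n, (1 - x * q ^ (j + 1))) *
          (∏ j ∈ Finset.range n, (1 - x⁻¹ * q ^ j)) /
          ∏ j ∈ Finset.range (2 * n), (1 - q ^ (j + 1))) 1 =
      -2 * (∏ j ∈ Finset.range (n - 1), (1 - q ^ (j + 1))) ^ 2 /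
        ∏ j ∈ Finset.range (2 * n), (1 - q ^ (j + 1)) := by
  obtain ⟨m, rfl⟩ := Nat.exists_eq_add_of_le' hn
  set D := ∏ j ∈ Finset.range (2 * (m + 1)), (1 - q ^ (j + 1))
  have hderiv_div (F : ℝ → ℝ) : deriv (fun x => F x / D) = fun x => deriv F x / D :=
    funext fun _ => deriv_div_const D
  simp only [prod_mul_prod_eq_mul_symmetricQProd, hderiv_div, Nat.add_sub_cancel]
  congr 1
  rw [← iteratedDeriv_two_eq_deriv_deriv, iteratedDeriv_two_mul (by fun_prop (disch := norm_num))
    (contDiffAt_symmetricQProd q m one_ne_zero), iteratedDeriv_two_one_sub_mul_one_sub_inv,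
    deriv_symmetricQProd_one, symmetricQProd_one]
  simp

/-- With `β'_n(x) = (xq;q)_n (x⁻¹;q)_n / (q;q)_{2n}` (viewed as a function of a real
variable `x`, with `q` a real parameter for which `(q;q)_{2n} ≠ 0`), we have
`d²/dx² β'_n(x)|_{x=1} = -2 (q;q)_{n-1}² / (q;q)_{2n}` for all `n ≥ 1`. -/
theorem second_deriv_beta_at_one (q : ℝ) (n : ℕ) (hn : 1 ≤ n)
    (hq : ∏ j ∈ Finset.range (2 * n), (1 - q ^ (j + 1)) ≠ 0) :
    deriv (deriv fun x : ℝ =>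
        (∏ j ∈ Finset.range n, (1 - x * q ^ (j + 1))) *
          (∏ j ∈ Finset.range n, (1 - x⁻¹ * q ^ j)) /
          ∏ j ∈ Finset.range (2 * n), (1 - q ^ (j + 1))) 1 =
      -2 * (∏ j ∈ Finset.range (n - 1), (1 - q ^ (j + 1))) ^ 2 /
        ∏ j ∈ Finset.range (2 * n), (1 - q ^ (j + 1)) :=
  second_deriv_beta_at_one_general q n hn
end

section
/- Let x be a formal variable and define β'_n(x) = (xq;q)_n (x^{-1};q)_n / (q;q)_{2n}. Then d²/dx² β'_n(x)|_{x=q^{-1}} = -2 q^{n+2} (q;q)_{n-1}² / (q;q)_{2n} for all n ≥ 1. -/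
/-!
Split off the factor `1 - xq`, which vanishes at `x = q⁻¹`: then `β'_n = (1 - xq) g` and
`β'_n''(q⁻¹) = -2q g'(q⁻¹)`. Pair the remaining factors as
`(1 - x q^{j+2})(1 - x⁻¹ q^j)`, `j < n - 1`, leaving `1 - x⁻¹ q^{n-1}` alone. Each pair is
invariant under `x ↦ q⁻² x⁻¹`, whose fixed point is `q⁻¹`, so it has derivative `0` there, and
only the lone factor contributes to `g'(q⁻¹)`.
-/

open Finset

theorem prod_one_sub_mul_pow_mul_prod_one_sub_mul_pow {R : Type*} [CommRing R] (x y q : R)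
    (m : ℕ) :
    (∏ j ∈ range (m + 1), (1 - x * q ^ (j + 1))) * ∏ j ∈ range (m + 1), (1 - y * q ^ j) =
      (1 - x * q) * ((∏ j ∈ range m, (1 - x * (q ^ j * q ^ 2)) * (1 - y * q ^ j)) *
        (1 - y * q ^ m)) := by
  rw [prod_range_succ', prod_range_succ, prod_mul_distrib]
  simp only [← pow_add, zero_add, pow_one]
  ring

section Calculus

variable {𝕜 : Type*} [NontriviallyNormedField 𝕜]

theorem deriv_deriv_affine_mul {g : 𝕜 → 𝕜} {a b c : 𝕜} (hg : ContDiffAt 𝕜 2 g c) :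
    deriv (deriv fun x => (a - x * b) * g x) c =
      -2 * b * deriv g c + (a - c * b) * deriv (deriv g) c := by
  have hu : ∀ x, HasDerivAt (fun x => a - x * b) (-b) x := fun x => by
    simpa using ((hasDerivAt_id x).mul_const b).const_sub a
  have hfirst : deriv (fun x => (a - x * b) * g x) =ᶠ[nhds c]
      fun x => -b * g x + (a - x * b) * deriv g x := by
    filter_upwards [hg.eventually (by simp)] with x hx
    exact ((hu x).mul (hx.differentiableAt two_ne_zero).hasDerivAt).deriv
  have hg' : DifferentiableAt 𝕜 (deriv g) c :=
    (hg.derivWithin (m := 1) le_rfl).differentiableAt one_ne_zero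
  rw [hfirst.deriv_eq, (((hg.differentiableAt two_ne_zero).hasDerivAt.const_mul (-b)).fun_add
    ((hu c).fun_mul hg'.hasDerivAt)).deriv]
  ring

theorem hasDerivAt_one_sub_mul_mul_one_sub_inv_mul {q : 𝕜} (hq : q ≠ 0) (a : 𝕜) :
    HasDerivAt (fun x => (1 - x * (a * q ^ 2)) * (1 - x⁻¹ * a)) 0 q⁻¹ := by
  have hu : HasDerivAt (fun x : 𝕜 => 1 - x * (a * q ^ 2)) (-(a * q ^ 2)) q⁻¹ := by
    simpa using ((hasDerivAt_id q⁻¹).mul_const (a * q ^ 2)).const_sub 1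
  have hv : HasDerivAt (fun x : 𝕜 => 1 - x⁻¹ * a) (q ^ 2 * a) q⁻¹ := by
    simpa using ((hasDerivAt_inv (inv_ne_zero hq)).mul_const a).const_sub 1
  refine (hu.fun_mul hv).congr_deriv ?_
  field_simp
  ring

theorem hasDerivAt_prod_pair_mul_one_sub_inv_mul {q : 𝕜} (hq : q ≠ 0) (m : ℕ) :
    HasDerivAt
      (fun x => (∏ j ∈ range m, (1 - x * (q ^ j * q ^ 2)) * (1 - x⁻¹ * q ^ j)) *
        (1 - x⁻¹ * q ^ m))
      ((∏ j ∈ range m, (1 - q ^ (j + 1))) ^ 2 * q ^ (m + 2)) q⁻¹ := by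
  have hprod := HasDerivAt.fun_finsetProd (u := range m) (f' := fun _ => 0)
    fun j _ => hasDerivAt_one_sub_mul_mul_one_sub_inv_mul hq (q ^ j)
  have hlast : HasDerivAt (fun x : 𝕜 => 1 - x⁻¹ * q ^ m) (q ^ (m + 2)) q⁻¹ := by
    refine (((hasDerivAt_inv (inv_ne_zero hq)).mul_const (q ^ m)).const_sub 1).congr_deriv ?_
    rw [inv_pow, inv_inv]
    ring
  have hvalue : ∀ j ∈ range m, (1 - q⁻¹ * (q ^ j * q ^ 2)) * (1 - q⁻¹⁻¹ * q ^ j) =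
      (1 - q ^ (j + 1)) ^ 2 := fun j _ => by
    field_simp
    ring
  refine (hprod.fun_mul hlast).congr_deriv ?_
  rw [prod_congr rfl hvalue, prod_pow]
  simp

end Calculus

theorem second_deriv_beta_at_qinv_general (q : ℝ) (hq0 : q ≠ 0) (n : ℕ) (hn : 1 ≤ n) :
    deriv (deriv fun x : ℝ =>
        (∏ j ∈ Finset.range n, (1 - x * q ^ (j + 1))) *
          (∏ j ∈ Finset.range n, (1 - x⁻¹ * q ^ j)) /
          ∏ j ∈ Finset.range (2 * n), (1 - q ^ (j + 1))) q⁻¹ =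
      -2 * q ^ (n + 2) * (∏ j ∈ Finset.range (n - 1), (1 - q ^ (j + 1))) ^ 2 /
        ∏ j ∈ Finset.range (2 * n), (1 - q ^ (j + 1)) := by
  obtain ⟨m, rfl⟩ : ∃ m, n = m + 1 := ⟨n - 1, by omega⟩
  set C := ∏ j ∈ range (2 * (m + 1)), (1 - q ^ (j + 1))
  set g : ℝ → ℝ := fun x =>
    (∏ j ∈ range m, (1 - x * (q ^ j * q ^ 2)) * (1 - x⁻¹ * q ^ j)) * (1 - x⁻¹ * q ^ m) / C
  have hfactor : (fun x : ℝ => (∏ j ∈ range (m + 1), (1 - x * q ^ (j + 1))) *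
      (∏ j ∈ range (m + 1), (1 - x⁻¹ * q ^ j)) / C) = fun x => (1 - x * q) * g x := by
    funext x
    rw [prod_one_sub_mul_pow_mul_prod_one_sub_mul_pow, mul_div_assoc]
  have hg : ContDiffAt ℝ 2 g q⁻¹ := by
    fun_prop (disch := exact inv_ne_zero hq0)
  rw [hfactor, deriv_deriv_affine_mul hg,
    ((hasDerivAt_prod_pair_mul_one_sub_inv_mul hq0 m).div_const C).deriv,
    inv_mul_cancel₀ hq0, Nat.add_sub_cancel]
  ring

/-- With `β'_n(x) = (xq;q)_n (x⁻¹;q)_n / (q;q)_{2n}` (viewed as a function of a real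
variable `x`, with `q ≠ 0` a real parameter for which `(q;q)_{2n} ≠ 0`), we have
`d²/dx² β'_n(x)|_{x=q⁻¹} = -2 q^{n+2} (q;q)_{n-1}² / (q;q)_{2n}` for all `n ≥ 1`. -/
theorem second_deriv_beta_at_qinv (q : ℝ) (hq0 : q ≠ 0) (n : ℕ) (hn : 1 ≤ n)
    (hq : ∏ j ∈ Finset.range (2 * n), (1 - q ^ (j + 1)) ≠ 0) :
    deriv (deriv fun x : ℝ =>
        (∏ j ∈ Finset.range n, (1 - x * q ^ (j + 1))) *
          (∏ j ∈ Finset.range n, (1 - x⁻¹ * q ^ j)) /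
          ∏ j ∈ Finset.range (2 * n), (1 - q ^ (j + 1))) q⁻¹ =
      -2 * q ^ (n + 2) * (∏ j ∈ Finset.range (n - 1), (1 - q ^ (j + 1))) ^ 2 /
        ∏ j ∈ Finset.range (2 * n), (1 - q ^ (j + 1)) :=
  second_deriv_beta_at_qinv_general q hq0 n hn
end
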